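/- arXiv:2204.02794 — 3 statements merged into one kernel-verified Lean document; each statement's English description precedes it below -/
import Mathlib

section
/- For the plumbing graph Γ with adjacency matrix B = [[-1,1,1,1],[1,-2,0,0],[1,0,-3,0],[1,0,0,-8]], the matrix B is negative definite, has determinant of absolute value 2 (so H_1(Y;Z) = Z/2Z for the plumbed manifold Y = S^3_{-2}(trefoil)), has signature σ(B) = -4, and when diagonalized over Z/3Z has trace w(X) such that σ(B) - w(X) ≡ 2 mod 4; hence the mod 3 Witt invariant of Y is w(Y) = 2 mod 4. -/
/-!
Sweeping out the tree from the central vertex is an integral congruence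
`Pᵀ B P = diag(-1, -1, -1, -2)` with `det P = 1`. Read over `ℝ` it exhibits `σ(B) = -4`
and negative definiteness, its determinant gives `det B = 2`, and read mod 3, where
`-2 ≡ 1`, it is a diagonalization with trace `-3 + 1 = -2`, so `σ(B) - w(X) = -2 ≡ 2 mod 4`.
-/

open Matrix

/-- The adjacency matrix of the plumbing graph of `Y = S³₋₂(3ʳ₁)`. -/
def Btref2 : Matrix (Fin 4) (Fin 4) ℤ :=
  !![-1, 1, 1, 1;
      1, -2, 0, 0;
      1, 0, -3, 0;
      1, 0, 0, -8]

namespace Matrix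

variable {n : Type*} [Fintype n]

theorem dotProduct_mulVec_mulVec_self {R : Type*} [CommSemiring R] (A P : Matrix n n R)
    (y : n → R) : P *ᵥ y ⬝ᵥ A *ᵥ P *ᵥ y = y ⬝ᵥ (Pᵀ * A * P) *ᵥ y := by
  rw [dotProduct_mulVec, ← vecMul_transpose, vecMul_vecMul, ← dotProduct_mulVec,
    vecMul_transpose, mulVec_mulVec]

variable [DecidableEq n]

theorem dotProduct_diagonal_mulVec_self_neg {K : Type*} [Field K] [LinearOrder K]
    [IsStrictOrderedRing K] {d : n → K} (hd : ∀ i, d i < 0) {y : n → K} (hy : y ≠ 0) :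
    y ⬝ᵥ diagonal d *ᵥ y < 0 := by
  obtain ⟨i, hi⟩ := Function.ne_iff.mp hy
  have hterm (j : n) : y j * (d j * y j) = d j * y j ^ 2 := by ring
  simp only [dotProduct, mulVec_diagonal, hterm]
  refine Finset.sum_neg' (fun j _ ↦ ?_) ⟨i, Finset.mem_univ _, ?_⟩
  · exact mul_nonpos_of_nonpos_of_nonneg (hd j).le (sq_nonneg _)
  · exact mul_neg_of_neg_of_pos (hd i) (pow_two_pos_of_ne_zero hi)

theorem dotProduct_mulVec_self_neg_of_transpose_mul_mul_eq_diagonal {K : Type*} [Field K]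
    [LinearOrder K] [IsStrictOrderedRing K] {A P : Matrix n n K} {d : n → K}
    (hP : IsUnit P.det) (hA : Pᵀ * A * P = diagonal d) (hd : ∀ i, d i < 0) {x : n → K}
    (hx : x ≠ 0) : x ⬝ᵥ A *ᵥ x < 0 := by
  have hx_eq : x = P *ᵥ P⁻¹ *ᵥ x := by rw [mulVec_mulVec, mul_nonsing_inv P hP, one_mulVec]
  have hy : P⁻¹ *ᵥ x ≠ 0 := fun h ↦ hx (by rw [hx_eq, h, mulVec_zero])
  rw [hx_eq, dotProduct_mulVec_mulVec_self, hA]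
  exact dotProduct_diagonal_mulVec_self_neg hd hy

theorem transpose_map_intCast_mul_mul_eq_diagonal {R : Type*} [CommRing R]
    {A P : Matrix n n ℤ} {d : n → ℤ} (h : Pᵀ * A * P = diagonal d) :
    (P.map (Int.cast : ℤ → R))ᵀ * A.map Int.cast * P.map Int.cast =
      diagonal (fun i ↦ (d i : R)) := by
  have := congrArg (map · (Int.castRingHom R)) h
  rwa [Matrix.map_mul, Matrix.map_mul, transpose_map, diagonal_map (map_zero _)] at this

theorem isUnit_det_map_intCast {R : Type*} [CommRing R] {P : Matrix n n ℤ}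
    (hP : P.det = 1) : IsUnit (P.map (Int.cast : ℤ → R)).det := by
  rw [← Int.cast_det, hP, Int.cast_one]
  exact isUnit_one

end Matrix

def Btref2Sweep : Matrix (Fin 4) (Fin 4) ℤ :=
  !![1, 1, 2, 6;
     0, 1, 1, 3;
     0, 0, 1, 2;
     0, 0, 0, 1]

def Btref2Diagonal : Fin 4 → ℤ := ![-1, -1, -1, -2]

theorem det_Btref2Sweep : Btref2Sweep.det = 1 := by decide

theorem Btref2Sweep_transpose_mul_mul :
    Btref2Sweepᵀ * Btref2 * Btref2Sweep = diagonal Btref2Diagonal := by decide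

theorem det_Btref2 : Btref2.det = 2 := by
  have h := congrArg det Btref2Sweep_transpose_mul_mul
  rwa [det_mul, det_mul, det_transpose, det_Btref2Sweep, one_mul, mul_one, det_diagonal,
    show ∏ i, Btref2Diagonal i = 2 by decide] at h

/-- `B` is negative definite, `|det B| = 2` (so `H₁(Y;ℤ) = ℤ/2`), its signature is
`σ(B) = -4` (witnessed by a real diagonalization with negative entries), and there is a
diagonalization of `B` over `ℤ/3ℤ` with diagonal entries in `{0, ±1}` whose trace
`w(X)` satisfies `σ(B) - w(X) ≡ 2 mod 4`; hence the mod 3 Witt invariant of `Y` is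
`w(Y) = 2 mod 4`. -/
theorem witt_invariant_S3_minus2_trefoil :
    (∀ x : Fin 4 → ℚ, x ≠ 0 → x ⬝ᵥ (Btref2.map (Int.cast : ℤ → ℚ)).mulVec x < 0) ∧
    Btref2.det.natAbs = 2 ∧
    (∃ P : Matrix (Fin 4) (Fin 4) ℝ, IsUnit P.det ∧ ∃ d : Fin 4 → ℝ,
      P.transpose * Btref2.map (Int.cast : ℤ → ℝ) * P = Matrix.diagonal d ∧
      ∀ i, d i < 0) ∧
    (∃ P : Matrix (Fin 4) (Fin 4) (ZMod 3), IsUnit P.det ∧ ∃ d : Fin 4 → ℤ,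
      (∀ i, d i = 0 ∨ d i = 1 ∨ d i = -1) ∧
      P.transpose * Btref2.map (Int.cast : ℤ → ZMod 3) * P =
        Matrix.diagonal (fun i => (d i : ZMod 3)) ∧
      (-4 - ∑ i, d i) % 4 = 2) := by
  have hneg (R : Type) [Field R] [LinearOrder R] [IsStrictOrderedRing R] (i : Fin 4) :
      ((Btref2Diagonal i : ℤ) : R) < 0 := by
    fin_cases i <;> simp [Btref2Diagonal]
  have hcongr (R : Type) [CommRing R] :=
    transpose_map_intCast_mul_mul_eq_diagonal (R := R) Btref2Sweep_transpose_mul_mul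
  have hunit (R : Type) [CommRing R] := isUnit_det_map_intCast (R := R) det_Btref2Sweep
  refine ⟨fun x hx ↦ dotProduct_mulVec_self_neg_of_transpose_mul_mul_eq_diagonal
      (hunit ℚ) (hcongr ℚ) (hneg ℚ) hx, by rw [det_Btref2]; rfl,
    ⟨_, hunit ℝ, _, hcongr ℝ, hneg ℝ⟩, ⟨_, hunit (ZMod 3), ![-1, -1, -1, 1], ?_, ?_, by decide⟩⟩
  · intro i
    fin_cases i <;> simp
  · rw [hcongr (ZMod 3)]
    congr 1
    funext i
    fin_cases i <;> decide
end

section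
/- Let Ψ_{m,r}(e^{2πi/k}) = Σ_{n=1}^{2mk} (1/2 - n/(2mk)) ψ^{(r)}_{2m}(n) e^{iπ n²/(2mk)}, where ψ^{(r)}_{2m}(n) = 1 if n ≡ r (mod 2m), = -1 if n ≡ -r (mod 2m), and 0 otherwise. Then for k = 6 and m = 18: e^{2πi·(71/72)/6} · (Ψ_{18,1} + Ψ_{18,17})(e^{2πi/6}) combined with the p=3 odd Witt coefficients c^Witt_0 = (e^{-iπ/4}/(4√3)) Σ_{r=0}^{5} e^{-(iπ/36)(6r+3)^2} and c^Witt_1, c^Witt_2 applied to Ẑ_0 = q^{71/72}(Ψ_{18,1}+Ψ_{18,17}) and Ẑ_1 = Ẑ_2 = -q^{71/72}(Ψ_{18,5}+Ψ_{18,13}) at q = e^{2πi/6} yields the value i√3. -/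
/-!
Every exponential involved is a root of unity. With `ζ = e^{πi/216}`, the value `e^{πi n²/216}`
is `± ζ^(n² mod 216)`, so `Ψ_{18,1}` and `Ψ_{18,17}` collapse to combinations of `ζ`, `ζ^73`,
`ζ^145`, and their sum is `2ζ^145`. With `η = e^{-πi/36}`, a primitive 72nd root of unity, the
Witt coefficients are Gauss sums `∑_r η^{(6r-2t+3)²}`: for `t = 0` every exponent `(6r+3)²` is
`9` mod 72, giving `c₀ = 6η^18/(4√3) = -i√3/2`; for `t = 1` one has `(6r+1)² ≡ 48r+1` mod 72,
a geometric sum over the cube root of unity `η^48`, so `c₁ = 0`. Finally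
`q^{71/72} ζ^145 = ζ^216 = -1`.
-/

open Complex Finset

/-- The Eichler integral of the weight 3/2 false theta function at the k-th root of
unity: `Ψ_{m,r}(e^{2πi/k}) = ∑_{n=1}^{2mk} (1/2 - n/(2mk)) ψ^{(r)}_{2m}(n) e^{iπn²/(2mk)}`,
where `ψ^{(r)}_{2m}(n) = ±1` for `n ≡ ±r (mod 2m)` and `0` otherwise. -/
noncomputable def PsiFT (m r k : ℕ) : ℂ :=
  ∑ n ∈ Finset.Icc 1 (2 * m * k),
    ((1 : ℂ) / 2 - (n : ℂ) / (2 * m * k)) *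
      (if n % (2 * m) = r % (2 * m) then 1
        else if (n + r) % (2 * m) = 0 then -1 else 0) *
      Complex.exp (Real.pi * I * (n : ℂ) ^ 2 / (2 * m * k))

/-- The odd Witt coefficients for `p = 3`:
`c^{Witt}_t = (e^{-iπ/4}/(4√3)) ∑_{r=0}^{5} e^{-(iπ/36)(6r-2t+3)²}`. -/
noncomputable def cWittP3 (t : ℕ) : ℂ :=
  (Complex.exp (-(Real.pi * I) / 4) / (4 * Real.sqrt 3)) *
    ∑ r ∈ range 6,
      Complex.exp (-(Real.pi * I / 36) * (6 * (r : ℂ) - 2 * (t : ℂ) + 3) ^ 2)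

open scoped Real

theorem pow_eq_neg_one_pow_div_mul_pow_mod {M : Type*} [Monoid M] [HasDistribNeg M] {x : M}
    {N : ℕ} (hx : x ^ N = -1) (n : ℕ) : x ^ n = (-1) ^ (n / N) * x ^ (n % N) := by
  conv_lhs => rw [← Nat.div_add_mod n N]
  rw [pow_add, pow_mul, hx]

theorem exp_pi_mul_I_div_pow_self {N : ℕ} (hN : N ≠ 0) : exp (π * I / N) ^ N = -1 := by
  rw [← exp_nat_mul, mul_div_cancel₀ _ (Nat.cast_ne_zero.mpr hN), exp_pi_mul_I]

theorem exp_pi_mul_I_mul_nat_div {N : ℕ} (hN : N ≠ 0) (n : ℕ) :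
    exp (π * I * n / N) = (-1) ^ (n / N) * exp (π * I / N) ^ (n % N) := by
  rw [← pow_eq_neg_one_pow_div_mul_pow_mod (exp_pi_mul_I_div_pow_self hN), ← exp_nat_mul]
  ring_nf

theorem PsiFT_eq_sum_filter (m r k : ℕ) :
    PsiFT m r k = ∑ n ∈ (Icc 1 (2 * m * k)).filter
        (fun n => n % (2 * m) = r % (2 * m) ∨ (n + r) % (2 * m) = 0),
      ((1 : ℂ) / 2 - (n : ℂ) / (2 * m * k)) * (if n % (2 * m) = r % (2 * m) then 1 else -1) *
        ((-1) ^ (n ^ 2 / (2 * m * k)) * exp (π * I / (2 * m * k)) ^ (n ^ 2 % (2 * m * k))) := by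
  rw [PsiFT, ← sum_filter_of_ne
    (p := fun n => n % (2 * m) = r % (2 * m) ∨ (n + r) % (2 * m) = 0)]
  · refine sum_congr rfl fun n hn => ?_
    obtain ⟨hn, hsupp⟩ := mem_filter.mp hn
    have hN : 2 * m * k ≠ 0 := by
      have := mem_Icc.mp hn; omega
    have hexp := exp_pi_mul_I_mul_nat_div hN (n ^ 2)
    push_cast at hexp
    rw [← hexp]
    split_ifs <;> first | omega | ring
  · intro n _ h
    by_contra hn
    rw [not_or] at hn
    simp [hn.1, hn.2] at h

theorem PsiFT_18_1_6 : PsiFT 18 1 6 =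
    exp (π * I / 216) + exp (π * I / 216) ^ 73 + exp (π * I / 216) ^ 145 := by
  rw [PsiFT_eq_sum_filter, show (Icc 1 (2 * 18 * 6)).filter
      (fun n => n % (2 * 18) = 1 % (2 * 18) ∨ (n + 1) % (2 * 18) = 0)
      = {1, 35, 37, 71, 73, 107, 109, 143, 145, 179, 181, 215} by decide]
  norm_num [sum_insert]
  ring

theorem PsiFT_18_17_6 : PsiFT 18 17 6 =
    -exp (π * I / 216) - exp (π * I / 216) ^ 73 + exp (π * I / 216) ^ 145 := by
  rw [PsiFT_eq_sum_filter, show (Icc 1 (2 * 18 * 6)).filter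
      (fun n => n % (2 * 18) = 17 % (2 * 18) ∨ (n + 17) % (2 * 18) = 0)
      = {17, 19, 53, 55, 89, 91, 125, 127, 161, 163, 197, 199} by decide]
  norm_num [sum_insert]
  ring

theorem isPrimitiveRoot_exp_neg_pi_mul_I_div {N : ℕ} (hN : N ≠ 0) :
    IsPrimitiveRoot (exp (-(π * I / N))) (2 * N) := by
  have h : exp (-(π * I / N)) = (exp (2 * π * I / (2 * N : ℕ)))⁻¹ := by
    rw [← exp_neg]
    congr 1
    push_cast
    field_simp
  rw [h]
  exact (Complex.isPrimitiveRoot_exp (2 * N) (by omega)).inv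

theorem cWittP3_eq_sum_pow {t : ℕ} (ht : t ≤ 1) :
    cWittP3 t = exp (-(π * I) / 4) / (4 * √3) *
      ∑ r ∈ range 6, exp (-(π * I / 36)) ^ ((6 * r + 3 - 2 * t) ^ 2) := by
  rw [cWittP3]
  congr 1
  refine sum_congr rfl fun r _ => ?_
  rw [← exp_nat_mul, Nat.cast_pow, Nat.cast_sub (by omega)]
  push_cast
  ring_nf

theorem cWittP3_zero : cWittP3 0 = -(√3 / 2 * I) := by
  set η := exp (-(π * I / 36))
  have hη : η ^ 72 = 1 := (isPrimitiveRoot_exp_neg_pi_mul_I_div (N := 36) (by norm_num)).pow_eq_one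
  have hsum : ∑ r ∈ range 6, η ^ ((6 * r + 3 - 2 * 0) ^ 2) = 6 * η ^ 9 := by
    rw [sum_congr rfl fun r _ => ?_, sum_const, card_range, nsmul_eq_mul, Nat.cast_ofNat]
    rw [pow_eq_pow_mod _ hη, pow_eq_pow_mod 9 hη]
    congr 1
    revert r
    decide
  have hη9 : exp (-(π * I) / 4) = η ^ 9 := by
    rw [← exp_nat_mul]; congr 1; push_cast; ring
  have hη18 : η ^ 18 = -I := by
    rw [← exp_nat_mul, ← exp_neg_pi_div_two_mul_I]; congr 1; push_cast; ring
  have h3 : ((√3 : ℝ) : ℂ) ^ 2 = 3 := by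
    rw [← ofReal_pow, Real.sq_sqrt (by norm_num)]; norm_num
  rw [cWittP3_eq_sum_pow (Nat.zero_le 1), hsum, hη9]
  field_simp
  linear_combination 12 * hη18 + 4 * I * h3

theorem cWittP3_one : cWittP3 1 = 0 := by
  set η := exp (-(π * I / 36))
  have hη : IsPrimitiveRoot η 72 := isPrimitiveRoot_exp_neg_pi_mul_I_div (N := 36) (by norm_num)
  have hsum : ∑ r ∈ range 6, η ^ ((6 * r + 3 - 2 * 1) ^ 2) = η * ∑ r ∈ range 6, (η ^ 48) ^ r := by
    rw [mul_sum]
    refine sum_congr rfl fun r _ => ?_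
    rw [← pow_mul, ← pow_succ', pow_eq_pow_mod _ hη.pow_eq_one,
      pow_eq_pow_mod (48 * r + 1) hη.pow_eq_one]
    congr 1
    revert r
    decide
  rw [cWittP3_eq_sum_pow le_rfl, hsum,
    geom_sum_eq (hη.pow_ne_one_of_pos_of_lt (by norm_num) (by norm_num)), ← pow_mul,
    pow_eq_pow_mod _ hη.pow_eq_one]
  norm_num

/-- For `Y = S³₋₃(3ʳ₁)` with `H₁ = ℤ/3`, `Ẑ₀ = q^{71/72}(Ψ_{18,1} + Ψ_{18,17})` and
`Ẑ₁ = -q^{71/72}(Ψ_{18,5} + Ψ_{18,13})` evaluated at `q = e^{2πi/6}` (so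
`q^{71/72} = e^{πi·71/216}`), together with the `p = 3` odd Witt coefficients, give
`c^{Witt}_0 Ẑ₀ + c^{Witt}_1 Ẑ₁ = i√3`. -/
theorem tau6_S3_minus3_trefoil :
    cWittP3 0 * (Complex.exp (Real.pi * I * 71 / 216) * (PsiFT 18 1 6 + PsiFT 18 17 6)) +
      cWittP3 1 *
        (-(Complex.exp (Real.pi * I * 71 / 216)) * (PsiFT 18 5 6 + PsiFT 18 13 6))
    = I * Real.sqrt 3 := by
  have hζ : exp (π * I / 216) ^ 216 = -1 := by
    simpa using exp_pi_mul_I_div_pow_self (N := 216) (by norm_num)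
  have hq : exp (π * I * 71 / 216) = exp (π * I / 216) ^ 71 := by
    rw [← exp_nat_mul]; congr 1; push_cast; ring
  rw [cWittP3_zero, cWittP3_one, PsiFT_18_1_6, PsiFT_18_17_6, hq]
  linear_combination -(√3 : ℂ) * I * hζ
end

section
/- The trace mod 4 of a diagonalization over F₃ (with entries ±1) of a nondegenerate symmetric bilinear form over F₃ is a well-defined invariant of the form's Witt class; i.e., if D and D' are two diagonal matrices with entries in {±1} congruent over F₃ to the same nondegenerate symmetric matrix, then Tr(D) ≡ Tr(D') mod 4 (traces taken as integer sums of ±1). -/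
open Matrix

lemma prod_pm_one {ι : Type*} [DecidableEq ι] (s : Finset ι) (d : ι → ℤ)
    (hd : ∀ i ∈ s, d i = 1 ∨ d i = -1) :
    (∏ i ∈ s, d i) = 1 ∨ (∏ i ∈ s, d i) = -1 := by
  induction s using Finset.induction with
  | empty => simp
  | @insert a s h ih =>
    rw [Finset.prod_insert h]
    rcases hd a (Finset.mem_insert_self a s) with h1 | h1 <;>
      rcases ih (fun i hi => hd i (Finset.mem_insert_of_mem hi)) with h2 | h2 <;>
      simp [h1, h2]

lemma sum_cong_aux {ι : Type*} [DecidableEq ι] (s : Finset ι) (d : ι → ℤ)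
    (hd : ∀ i ∈ s, d i = 1 ∨ d i = -1) :
    (∑ i ∈ s, d i) ≡ (s.card : ℤ) - 1 + ∏ i ∈ s, d i [ZMOD 4] := by
  induction s using Finset.induction with
  | empty => simp [Int.ModEq]
  | @insert a s h ih =>
    have hmem := fun i hi => hd i (Finset.mem_insert_of_mem hi)
    have ihs := ih hmem
    have hprod := prod_pm_one s d hmem
    rw [Finset.sum_insert h, Finset.prod_insert h, Finset.card_insert_of_notMem h]
    rcases hd a (Finset.mem_insert_self a s) with h1 | h1
    · rw [h1]
      push_cast
      calc 1 + ∑ i ∈ s, d i ≡ 1 + ((s.card : ℤ) - 1 + ∏ i ∈ s, d i) [ZMOD 4] :=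
            Int.ModEq.add_left 1 ihs
        _ = (s.card : ℤ) + 1 - 1 + 1 * ∏ i ∈ s, d i := by ring
    · rw [h1]
      push_cast
      have key : (-1 : ℤ) + ((s.card : ℤ) - 1 + ∏ i ∈ s, d i) ≡
          (s.card : ℤ) + 1 - 1 + (-1) * ∏ i ∈ s, d i [ZMOD 4] := by
        rcases hprod with h2 | h2 <;> rw [h2] <;> simp only [Int.ModEq] <;> omega
      calc (-1 : ℤ) + ∑ i ∈ s, d i ≡ -1 + ((s.card : ℤ) - 1 + ∏ i ∈ s, d i) [ZMOD 4] :=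
            Int.ModEq.add_left _ ihs
        _ ≡ (s.card : ℤ) + 1 - 1 + (-1) * ∏ i ∈ s, d i [ZMOD 4] := key

/-- The trace mod 4 of a `±1`-diagonalization over `F₃` of a nondegenerate symmetric
bilinear form is well defined: if two diagonal matrices with entries in `{±1}` are both
congruent over `ℤ/3ℤ` to the same nondegenerate symmetric matrix `M`, then their
traces (as integer sums of `±1`) agree mod 4.  This reflects `W(F₃) ≅ ℤ/4ℤ`. -/
theorem witt_trace_mod_four_well_defined {n : ℕ}
    (M : Matrix (Fin n) (Fin n) (ZMod 3)) (hM : M.IsSymm) (hMdet : IsUnit M.det)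
    (d d' : Fin n → ℤ)
    (hd : ∀ i, d i = 1 ∨ d i = -1) (hd' : ∀ i, d' i = 1 ∨ d' i = -1)
    (P P' : Matrix (Fin n) (Fin n) (ZMod 3))
    (hP : IsUnit P.det) (hP' : IsUnit P'.det)
    (hdiag : P.transpose * M * P = Matrix.diagonal (fun i => (d i : ZMod 3)))
    (hdiag' : P'.transpose * M * P' = Matrix.diagonal (fun i => (d' i : ZMod 3))) :
    (∑ i, d i) ≡ (∑ i, d' i) [ZMOD 4] := by
  have sq_one : ∀ u : ZMod 3, u ≠ 0 → u * u = 1 := by decide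
  have hdet : ∀ (Q : Matrix (Fin n) (Fin n) (ZMod 3)) (e : Fin n → ℤ),
      IsUnit Q.det → Q.transpose * M * Q = Matrix.diagonal (fun i => (e i : ZMod 3)) →
      ((∏ i, e i : ℤ) : ZMod 3) = M.det := by
    intro Q e hQ heq
    have := congrArg Matrix.det heq
    rw [Matrix.det_mul, Matrix.det_mul, Matrix.det_transpose, Matrix.det_diagonal] at this
    have hne : Q.det ≠ 0 := hQ.ne_zero
    push_cast
    rw [← this]
    rw [mul_comm Q.det M.det, mul_assoc, sq_one Q.det hne, mul_one]
  have h1 := hdet P d hP hdiag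
  have h2 := hdet P' d' hP' hdiag'
  have hprod : (∏ i, d i) = (∏ i, d' i) := by
    have heq : ((∏ i, d i : ℤ) : ZMod 3) = ((∏ i, d' i : ℤ) : ZMod 3) := h1.trans h2.symm
    rcases prod_pm_one Finset.univ d (fun i _ => hd i) with ha | ha <;>
      rcases prod_pm_one Finset.univ d' (fun i _ => hd' i) with hb | hb <;>
      rw [ha, hb] at heq ⊢ <;> first | rfl | (exfalso; revert heq; decide)
  calc (∑ i, d i) ≡ ((Finset.univ : Finset (Fin n)).card : ℤ) - 1 + ∏ i, d i [ZMOD 4] :=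
        sum_cong_aux _ d (fun i _ => hd i)
    _ = ((Finset.univ : Finset (Fin n)).card : ℤ) - 1 + ∏ i, d' i := by rw [hprod]
    _ ≡ (∑ i, d' i) [ZMOD 4] := (sum_cong_aux _ d' (fun i _ => hd' i)).symm
end
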